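/- Let G be a group and s, t ∈ G elements satisfying prod(s,t;n) = prod(t,s;n) for some n ≥ 3, such that s and t generate a group isomorphic to the Artin group A(I₂(n)) = ⟨s, t | prod(s,t;n) = prod(t,s;n)⟩ via the obvious map. Then for a positive integer m, prod(s,t;m) = prod(t,s;m) holds in G if and only if n divides m. -/

import Mathlib

/-!
By injectivity, a relation `prod(s,t;m) = prod(t,s;m)` holds in `G` exactly when it holds in
`A(I₂(n))`. There it holds for `n ∣ m` by iterating the defining relation. Conversely,
`A(I₂(n))` maps onto the dihedral group of order `2n` (its Coxeter quotient), sending `s`, `t` to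
the reflections `sr 0`, `sr 1`; their alternating products of length `m` are `r (±k)` for
`m = 2k` and `sr k`, `sr (1 - k)` for `m = 2k + 1`, which agree iff `m ≡ 0 mod n`.
-/

/-- `altProd a b ℓ` is the alternating product `a * b * a * ⋯` with `ℓ` factors, starting with `a`. -/
def altProd {G : Type*} [Monoid G] : G → G → ℕ → G
  | _, _, 0 => 1
  | a, b, n + 1 => a * altProd b a n

/-- The single defining relator of the dihedral-type Artin group `A(I₂(n))`
on generators `s = of true`, `t = of false`. -/
def dihedralArtinRels (n : ℕ) : Set (FreeGroup Bool) :=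
  { altProd (FreeGroup.of true) (FreeGroup.of false) n
      * (altProd (FreeGroup.of false) (FreeGroup.of true) n)⁻¹ }

/-- The dihedral-type Artin group `A(I₂(n)) = ⟨s, t ∣ prod(s,t;n) = prod(t,s;n)⟩`. -/
abbrev DihedralArtin (n : ℕ) : Type := PresentedGroup (dihedralArtinRels n)

section altProd

variable {M : Type*} [Monoid M]

lemma altProd_two_mul (a b : M) (k : ℕ) : altProd a b (2 * k) = (a * b) ^ k := by
  induction k with
  | zero => exact (pow_zero _).symm
  | succ k ih => rw [Nat.mul_succ, pow_succ', ← ih, mul_assoc]; rfl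

lemma altProd_two_mul_add_one (a b : M) (k : ℕ) :
    altProd a b (2 * k + 1) = a * (b * a) ^ k := by
  rw [altProd, altProd_two_mul]

lemma altProd_add (a b : M) (x y : ℕ) :
    altProd a b (x + y) = altProd a b x * if Even x then altProd a b y else altProd b a y := by
  induction x generalizing a b with
  | zero => simp [altProd]
  | succ x ih =>
    rw [Nat.succ_add, altProd, altProd, ih]
    by_cases hx : Even x <;> simp [hx, Nat.even_add_one, mul_assoc]

lemma altProd_mul_eq_of_altProd_eq {a b : M} {n : ℕ} (h : altProd a b n = altProd b a n)
    (k : ℕ) : altProd a b (n * k) = altProd b a (n * k) := by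
  induction k with
  | zero => rfl
  | succ k ih => rw [Nat.mul_succ, add_comm, altProd_add, altProd_add, h, ih]

lemma map_altProd {N F : Type*} [Monoid N] [FunLike F M N] [MonoidHomClass F M N] (f : F)
    (a b : M) (k : ℕ) : f (altProd a b k) = altProd (f a) (f b) k := by
  induction k generalizing a b with
  | zero => exact map_one f
  | succ k ih => rw [altProd, altProd, map_mul, ih]

end altProd

namespace DihedralGroup

variable {n : ℕ}

lemma altProd_sr_sr_two_mul (i j : ZMod n) (k : ℕ) :
    altProd (sr i) (sr j) (2 * k) = r ((j - i) * (k : ZMod n)) := by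
  rw [altProd_two_mul, sr_mul_sr, r_pow]

lemma altProd_sr_sr_two_mul_add_one (i j : ZMod n) (k : ℕ) :
    altProd (sr i) (sr j) (2 * k + 1) = sr (i + (i - j) * (k : ZMod n)) := by
  rw [altProd_two_mul_add_one, sr_mul_sr, r_pow, sr_mul_r]

lemma altProd_sr_zero_sr_one_eq_iff (m : ℕ) :
    altProd (sr 0) (sr 1) m = altProd (sr (1 : ZMod n)) (sr 0) m ↔ (m : ZMod n) = 0 := by
  obtain ⟨k, rfl | rfl⟩ := Nat.even_or_odd' m
  · rw [altProd_sr_sr_two_mul, altProd_sr_sr_two_mul, r.injEq]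
    push_cast
    constructor <;> intro h <;> linear_combination h
  · rw [altProd_sr_sr_two_mul_add_one, altProd_sr_sr_two_mul_add_one, sr.injEq]
    push_cast
    constructor <;> intro h <;> linear_combination -h

end DihedralGroup

namespace DihedralArtin

variable {n : ℕ}

lemma altProd_of_true_of_false :
    altProd (PresentedGroup.of true : DihedralArtin n) (PresentedGroup.of false) n =
      altProd (PresentedGroup.of false) (PresentedGroup.of true) n := by
  have h := PresentedGroup.mk_eq_mk_of_mul_inv_mem (rels := dihedralArtinRels n) rfl
  rwa [map_altProd, map_altProd] at h

def toDihedralGroup (n : ℕ) : DihedralArtin n →* DihedralGroup n :=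
  PresentedGroup.toGroup (f := fun b => if b then DihedralGroup.sr 0 else DihedralGroup.sr 1) <| by
    rintro _ rfl
    rw [map_mul, map_inv, mul_inv_eq_one, map_altProd, map_altProd]
    simpa using (DihedralGroup.altProd_sr_zero_sr_one_eq_iff n).2 (ZMod.natCast_self n)

lemma altProd_of_true_of_false_eq_iff (m : ℕ) :
    altProd (PresentedGroup.of true : DihedralArtin n) (PresentedGroup.of false) m =
      altProd (PresentedGroup.of false) (PresentedGroup.of true) m ↔ n ∣ m := by
  refine ⟨fun h => ?_, ?_⟩
  · rw [← ZMod.natCast_eq_zero_iff, ← DihedralGroup.altProd_sr_zero_sr_one_eq_iff]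
    simpa [map_altProd, toDihedralGroup] using congrArg (toDihedralGroup n) h
  · rintro ⟨k, rfl⟩
    exact altProd_mul_eq_of_altProd_eq altProd_of_true_of_false k

end DihedralArtin

theorem artin_I2_relations_in_group_general {G : Type*} [Group G] (n : ℕ) (s t : G)
    (hembed : ∃ φ : DihedralArtin n →* G,
      φ (PresentedGroup.of true) = s ∧ φ (PresentedGroup.of false) = t ∧
        Function.Injective φ) :
    ∀ m : ℕ, 0 < m → (altProd s t m = altProd t s m ↔ n ∣ m) := by
  obtain ⟨φ, rfl, rfl, hφ⟩ := hembed
  intro m _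
  rw [← map_altProd, ← map_altProd, hφ.eq_iff]
  exact DihedralArtin.altProd_of_true_of_false_eq_iff m

theorem artin_I2_relations_in_group {G : Type*} [Group G] (n : ℕ) (hn : 3 ≤ n) (s t : G)
    (hrel : altProd s t n = altProd t s n)
    (hembed : ∃ φ : DihedralArtin n →* G,
      φ (PresentedGroup.of true) = s ∧ φ (PresentedGroup.of false) = t ∧
        Function.Injective φ) :
    ∀ m : ℕ, 0 < m → (altProd s t m = altProd t s m ↔ n ∣ m) :=
  artin_I2_relations_in_group_general n s t hembed
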